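/- The misère quotient monoid of the Partizan Kayles universe is isomorphic to the group of integers under addition: the map sending a position with k strips of length ≡ 1 (mod 3) and j strips of length ≡ 2 (mod 3) to k − j ∈ ℤ induces a bijection between equivalence classes (modulo the Kayles universe) and ℤ, and is additive with respect to disjunctive sum. -/

import Mathlib

/-- Add a strip of length `k` to a position (strips of length 0 are discarded). -/
def addStrip (m : Multiset ℕ) (k : ℕ) : Multiset ℕ := if k = 0 then m else k ::ₘ m

/-- Left removes one square from a strip of length `n ≥ 1`, leaving strips `i` and `n-1-i`. -/
def LeftMove (G G' : Multiset ℕ) : Prop :=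
  ∃ n ∈ G, ∃ i, i + 1 ≤ n ∧ G' = addStrip (addStrip (G.erase n) i) (n - 1 - i)

/-- Right removes two adjacent squares from a strip of length `n ≥ 2`, leaving `i` and `n-2-i`. -/
def RightMove (G G' : Multiset ℕ) : Prop :=
  ∃ n ∈ G, ∃ i, i + 2 ≤ n ∧ G' = addStrip (addStrip (G.erase n) i) (n - 2 - i)

mutual
  /-- Misère play: Left, to move, wins (a player unable to move wins). -/
  inductive LeftWinsMover : Multiset ℕ → Prop
    | cannot (G : Multiset ℕ) : (¬ ∃ G', LeftMove G G') → LeftWinsMover G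
    | move (G G' : Multiset ℕ) : LeftMove G G' → LeftWinsWaiter G' → LeftWinsMover G
  /-- Misère play: Left wins with Right to move. -/
  inductive LeftWinsWaiter : Multiset ℕ → Prop
    | intro (G : Multiset ℕ) : (∃ G', RightMove G G') →
        (∀ G', RightMove G G' → LeftWinsMover G') → LeftWinsWaiter G
end

inductive Outcome | L | N | P | R
  deriving DecidableEq

open Classical in
/-- The misère outcome `o⁻(G)`. -/
noncomputable def outcome (G : Multiset ℕ) : Outcome :=
  if LeftWinsMover G then (if LeftWinsWaiter G then Outcome.L else Outcome.N)
  else (if LeftWinsWaiter G then Outcome.P else Outcome.R)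

/-- The partial order on outcomes: `L` greatest, `R` least, `N` and `P` incomparable. -/
def Outcome.le (a b : Outcome) : Prop := a = b ∨ a = Outcome.R ∨ b = Outcome.L

/-- `pos k j` is the position `kS₁ + jS₂`. -/
def pos (k j : ℕ) : Multiset ℕ := Multiset.replicate k 1 + Multiset.replicate j 2

/-- The map sending a position to (number of strips ≡ 1 mod 3) − (number of strips ≡ 2 mod 3). -/
def kaylesPhi (G : Multiset ℕ) : ℤ :=
  ((G.filter (fun m => m % 3 = 1)).card : ℤ) - ((G.filter (fun m => m % 3 = 2)).card : ℤ)

/-!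
Give a strip of length `n` the value `1`, `-1` or `0` according as `n ≡ 1`, `2` or `0 (mod 3)`;
`kaylesPhi G` is the total value `φ`. By induction on the number of squares, Left wins moving
first iff `φ ≤ 0` and `φ ≡ 0 (mod 3)`, and wins moving second iff `φ ≤ 0` and `φ ≡ 2 (mod 3)`:
a Left move changes `φ` by `-1` or `2`, a Right move by `-2` or `1`, and Right can always gain
exactly `1` while Left can always lose exactly `1` unless only strips of length `2` remain.
So the outcome depends on `φ` alone, it is `N` at `φ = 0` and `R` for `φ > 0`, and adding a
position of value `-min φ(G) φ(H)` tells apart positions of different values.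
-/

def stripValue (n : ℕ) : ℤ := if n % 3 = 1 then 1 else if n % 3 = 2 then -1 else 0

-- These hold because `stripValue m ≡ m (mod 3)` and `|stripValue m| ≤ 1`.
lemma stripValue_add_stripValue_of_leftSplit {n i : ℕ} (hi : i + 1 ≤ n) :
    stripValue i + stripValue (n - 1 - i) = stripValue n - 1 ∨
      stripValue i + stripValue (n - 1 - i) = stripValue n + 2 := by
  unfold stripValue; split_ifs <;> omega

lemma stripValue_add_stripValue_of_rightSplit {n i : ℕ} (hi : i + 2 ≤ n) :
    stripValue i + stripValue (n - 2 - i) = stripValue n - 2 ∨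
      stripValue i + stripValue (n - 2 - i) = stripValue n + 1 := by
  unfold stripValue; split_ifs <;> omega

lemma exists_stripValue_add_eq_sub_one {n : ℕ} (h0 : n ≠ 0) (h2 : n ≠ 2) :
    ∃ i, i + 1 ≤ n ∧ stripValue i + stripValue (n - 1 - i) = stripValue n - 1 := by
  by_cases hmod : n % 3 = 2
  · exact ⟨2, by omega, by unfold stripValue; grind⟩
  · exact ⟨0, by omega, by unfold stripValue; grind⟩

lemma exists_stripValue_add_eq_add_one {n : ℕ} (hn : 2 ≤ n) :
    ∃ i, i + 2 ≤ n ∧ stripValue i + stripValue (n - 2 - i) = stripValue n + 1 := by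
  by_cases hmod : n % 3 = 1
  · exact ⟨1, by omega, by unfold stripValue; grind⟩
  · exact ⟨0, by omega, by unfold stripValue; grind⟩

lemma kaylesPhi_eq_sum_map (G : Multiset ℕ) : kaylesPhi G = (G.map stripValue).sum := by
  induction G using Multiset.induction with
  | empty => rfl
  | cons a G ih =>
    simp only [kaylesPhi, Multiset.filter_cons, Multiset.card_add, Multiset.map_cons,
      Multiset.sum_cons, ← ih, stripValue]
    split_ifs <;> simp_all <;> omega

lemma kaylesPhi_add (G H : Multiset ℕ) : kaylesPhi (G + H) = kaylesPhi G + kaylesPhi H := by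
  simp only [kaylesPhi_eq_sum_map, Multiset.map_add, Multiset.sum_add]

lemma kaylesPhi_cons (n : ℕ) (G : Multiset ℕ) :
    kaylesPhi (n ::ₘ G) = stripValue n + kaylesPhi G := by
  simp only [kaylesPhi_eq_sum_map, Multiset.map_cons, Multiset.sum_cons]

lemma kaylesPhi_addStrip (G : Multiset ℕ) (k : ℕ) :
    kaylesPhi (addStrip G k) = kaylesPhi G + stripValue k := by
  unfold addStrip
  split_ifs with hk
  · simp [hk, stripValue]
  · rw [kaylesPhi_cons, add_comm]

lemma sum_addStrip (G : Multiset ℕ) (k : ℕ) : (addStrip G k).sum = G.sum + k := by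
  unfold addStrip
  split_ifs with hk
  · rw [hk, add_zero]
  · rw [Multiset.sum_cons, add_comm]

lemma kaylesPhi_nonpos {G : Multiset ℕ} (h : ∀ n ∈ G, n % 3 ≠ 1) : kaylesPhi G ≤ 0 := by
  have hA : (G.filter fun m => m % 3 = 1) = 0 := Multiset.filter_eq_nil.mpr h
  simp only [kaylesPhi, hA, Multiset.card_zero]
  omega

lemma exists_mem_mod_three_eq_two_of_kaylesPhi_neg {G : Multiset ℕ} (h : kaylesPhi G < 0) :
    ∃ n ∈ G, n % 3 = 2 := by
  by_contra! hG
  have hA : (G.filter fun m => m % 3 = 2) = 0 := Multiset.filter_eq_nil.mpr hG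
  simp only [kaylesPhi, hA, Multiset.card_zero] at h
  omega

lemma kaylesPhi_pos_eq (k j : ℕ) : kaylesPhi (pos k j) = k - j := by
  simp [pos, kaylesPhi_eq_sum_map, stripValue, sub_eq_add_neg]

lemma exists_kaylesPhi_eq (z : ℤ) : ∃ G : Multiset ℕ, 0 ∉ G ∧ kaylesPhi G = z := by
  refine ⟨pos z.toNat (-z).toNat, ?_, ?_⟩
  · simp [pos, Multiset.mem_replicate]
  · rw [kaylesPhi_pos_eq]
    omega

def splitStrip (G : Multiset ℕ) (n i j : ℕ) : Multiset ℕ :=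
  addStrip (addStrip (G.erase n) i) j

section splitStrip

variable {G G' : Multiset ℕ} {n : ℕ}

lemma leftMove_iff :
    LeftMove G G' ↔ ∃ n ∈ G, ∃ i, i + 1 ≤ n ∧ G' = splitStrip G n i (n - 1 - i) :=
  Iff.rfl

lemma rightMove_iff :
    RightMove G G' ↔ ∃ n ∈ G, ∃ i, i + 2 ≤ n ∧ G' = splitStrip G n i (n - 2 - i) :=
  Iff.rfl

lemma sum_splitStrip (hn : n ∈ G) (i j : ℕ) : (splitStrip G n i j).sum + n = G.sum + i + j := by
  rw [splitStrip, sum_addStrip, sum_addStrip, ← Multiset.cons_erase hn, Multiset.sum_cons,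
    Multiset.erase_cons_head]
  ring

lemma kaylesPhi_splitStrip (hn : n ∈ G) (i j : ℕ) :
    kaylesPhi (splitStrip G n i j) + stripValue n = kaylesPhi G + stripValue i + stripValue j := by
  rw [splitStrip, kaylesPhi_addStrip, kaylesPhi_addStrip, ← Multiset.cons_erase hn,
    kaylesPhi_cons, Multiset.erase_cons_head]
  ring

lemma exists_leftMove_kaylesPhi_eq_sub_one (hn : n ∈ G) (h0 : n ≠ 0) (h2 : n ≠ 2) :
    ∃ G', LeftMove G G' ∧ kaylesPhi G' = kaylesPhi G - 1 := by
  obtain ⟨i, hi, hval⟩ := exists_stripValue_add_eq_sub_one h0 h2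
  refine ⟨splitStrip G n i (n - 1 - i), ⟨n, hn, i, hi, rfl⟩, ?_⟩
  have := kaylesPhi_splitStrip hn i (n - 1 - i)
  omega

lemma exists_rightMove_kaylesPhi_eq_add_one (hn : n ∈ G) (h2 : 2 ≤ n) :
    ∃ G', RightMove G G' ∧ kaylesPhi G' = kaylesPhi G + 1 := by
  obtain ⟨i, hi, hval⟩ := exists_stripValue_add_eq_add_one h2
  refine ⟨splitStrip G n i (n - 2 - i), ⟨n, hn, i, hi, rfl⟩, ?_⟩
  have := kaylesPhi_splitStrip hn i (n - 2 - i)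
  omega

lemma LeftMove.sum_lt (h : LeftMove G G') : G'.sum < G.sum := by
  obtain ⟨n, hn, i, hi, rfl⟩ := leftMove_iff.1 h
  have := sum_splitStrip hn i (n - 1 - i)
  omega

lemma RightMove.sum_lt (h : RightMove G G') : G'.sum < G.sum := by
  obtain ⟨n, hn, i, hi, rfl⟩ := rightMove_iff.1 h
  have := sum_splitStrip hn i (n - 2 - i)
  omega

lemma LeftMove.kaylesPhi_eq (h : LeftMove G G') :
    kaylesPhi G' = kaylesPhi G - 1 ∨ kaylesPhi G' = kaylesPhi G + 2 := by
  obtain ⟨n, hn, i, hi, rfl⟩ := leftMove_iff.1 h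
  have := kaylesPhi_splitStrip hn i (n - 1 - i)
  have := stripValue_add_stripValue_of_leftSplit hi
  omega

lemma RightMove.kaylesPhi_eq (h : RightMove G G') :
    kaylesPhi G' = kaylesPhi G - 2 ∨ kaylesPhi G' = kaylesPhi G + 1 := by
  obtain ⟨n, hn, i, hi, rfl⟩ := rightMove_iff.1 h
  have := kaylesPhi_splitStrip hn i (n - 2 - i)
  have := stripValue_add_stripValue_of_rightSplit hi
  omega

end splitStrip

lemma kaylesPhi_eq_zero_of_not_exists_leftMove {G : Multiset ℕ} (h : ¬∃ G', LeftMove G G') :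
    kaylesPhi G = 0 := by
  rw [kaylesPhi_eq_sum_map]
  refine Multiset.sum_eq_zero fun x hx => ?_
  obtain ⟨n, hn, rfl⟩ := Multiset.mem_map.mp hx
  obtain rfl : n = 0 := by
    by_contra hn0
    exact h ⟨_, n, hn, 0, by omega, rfl⟩
  rfl

section inductionStep

variable {G : Multiset ℕ}

lemma leftWinsMover_iff_of_leftMove
    (ih : ∀ G', LeftMove G G' →
      (LeftWinsWaiter G' ↔ kaylesPhi G' ≤ 0 ∧ 3 ∣ kaylesPhi G' + 1)) :
    LeftWinsMover G ↔ kaylesPhi G ≤ 0 ∧ 3 ∣ kaylesPhi G := by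
  constructor
  · rintro (⟨_, hstuck⟩ | ⟨_, G', hmove, hwin⟩)
    · simp [kaylesPhi_eq_zero_of_not_exists_leftMove hstuck]
    · obtain ⟨hle, hdvd⟩ := (ih G' hmove).1 hwin
      rcases hmove.kaylesPhi_eq with h | h <;> omega
  · rintro ⟨hle, hdvd⟩
    by_cases hgood : ∃ n ∈ G, n ≠ 0 ∧ n ≠ 2
    · obtain ⟨n, hn, h0, h2⟩ := hgood
      obtain ⟨G', hmove, hG'⟩ := exists_leftMove_kaylesPhi_eq_sub_one hn h0 h2
      exact .move G G' hmove ((ih G' hmove).2 ⟨by omega, by omega⟩)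
    push Not at hgood
    by_cases htwo : 2 ∈ G
    · -- all strips have length 0 or 2, so `kaylesPhi G ≤ -3` and Left can afford to split a 2
      have hrest : kaylesPhi (G.erase 2) ≤ 0 := kaylesPhi_nonpos fun n hn => by
        have := hgood n (Multiset.mem_of_mem_erase hn)
        omega
      have hG := kaylesPhi_cons 2 (G.erase 2)
      rw [Multiset.cons_erase htwo] at hG
      have hG' := kaylesPhi_splitStrip htwo 0 1
      have hmove : LeftMove G (splitStrip G 2 0 1) := ⟨2, htwo, 0, by norm_num, rfl⟩
      norm_num [stripValue] at hG hG'
      exact .move G _ hmove ((ih _ hmove).2 ⟨by omega, by omega⟩)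
    · refine .cannot G fun ⟨G', n, hn, i, hi, _⟩ => htwo ?_
      obtain rfl : n = 2 := hgood n hn (by omega)
      exact hn

lemma leftWinsWaiter_iff_of_rightMove
    (ih : ∀ G', RightMove G G' →
      (LeftWinsMover G' ↔ kaylesPhi G' ≤ 0 ∧ 3 ∣ kaylesPhi G')) :
    LeftWinsWaiter G ↔ kaylesPhi G ≤ 0 ∧ 3 ∣ kaylesPhi G + 1 := by
  constructor
  · rintro ⟨_, ⟨_, n, hn, i, hi, -⟩, hwin⟩
    obtain ⟨G', hmove, hG'⟩ := exists_rightMove_kaylesPhi_eq_add_one hn (by omega)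
    obtain ⟨hle, hdvd⟩ := (ih G' hmove).1 (hwin G' hmove)
    exact ⟨by omega, by omega⟩
  · rintro ⟨hle, hdvd⟩
    have hneg : kaylesPhi G < 0 := by omega
    obtain ⟨n, hn, hn2⟩ := exists_mem_mod_three_eq_two_of_kaylesPhi_neg hneg
    refine .intro G ⟨_, n, hn, 0, by omega, rfl⟩ fun G' hmove => (ih G' hmove).2 ?_
    rcases hmove.kaylesPhi_eq with h | h <;> exact ⟨by omega, by omega⟩

end inductionStep

theorem leftWins_iff_kaylesPhi (G : Multiset ℕ) :
    (LeftWinsMover G ↔ kaylesPhi G ≤ 0 ∧ 3 ∣ kaylesPhi G) ∧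
      (LeftWinsWaiter G ↔ kaylesPhi G ≤ 0 ∧ 3 ∣ kaylesPhi G + 1) := by
  induction hs : G.sum using Nat.strong_induction_on generalizing G with
  | _ s ih =>
    subst hs
    exact ⟨leftWinsMover_iff_of_leftMove fun G' h => (ih _ h.sum_lt G' rfl).2,
      leftWinsWaiter_iff_of_rightMove fun G' h => (ih _ h.sum_lt G' rfl).1⟩

lemma outcome_eq_of_kaylesPhi_eq {G H : Multiset ℕ} (h : kaylesPhi G = kaylesPhi H) :
    outcome G = outcome H := by
  simp only [outcome, (leftWins_iff_kaylesPhi G).1, (leftWins_iff_kaylesPhi G).2,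
    (leftWins_iff_kaylesPhi H).1, (leftWins_iff_kaylesPhi H).2, h]

lemma outcome_ne_of_kaylesPhi_eq_zero_of_pos {G H : Multiset ℕ} (hG : kaylesPhi G = 0)
    (hH : 0 < kaylesPhi H) : outcome G ≠ outcome H := by
  simp [outcome, leftWins_iff_kaylesPhi, hG, hH.not_ge]

theorem kayles_monoid_iso_int :
    (∀ G H : Multiset ℕ, kaylesPhi (G + H) = kaylesPhi G + kaylesPhi H) ∧
    (∀ G H : Multiset ℕ, 0 ∉ G → 0 ∉ H →
      ((∀ X : Multiset ℕ, 0 ∉ X → outcome (G + X) = outcome (H + X)) ↔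
        kaylesPhi G = kaylesPhi H)) ∧
    (∀ z : ℤ, ∃ G : Multiset ℕ, 0 ∉ G ∧ kaylesPhi G = z) := by
  refine ⟨kaylesPhi_add, fun G H _ _ => ⟨fun h => ?_, fun h X _ => ?_⟩, exists_kaylesPhi_eq⟩
  · by_contra hne
    obtain ⟨X, hX0, hX⟩ := exists_kaylesPhi_eq (-min (kaylesPhi G) (kaylesPhi H))
    have hGX := kaylesPhi_add G X
    have hHX := kaylesPhi_add H X
    rcases lt_or_gt_of_ne hne with hlt | hlt
    · exact outcome_ne_of_kaylesPhi_eq_zero_of_pos (by omega) (by omega) (h X hX0)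
    · exact outcome_ne_of_kaylesPhi_eq_zero_of_pos (by omega) (by omega) (h X hX0).symm
  · exact outcome_eq_of_kaylesPhi_eq (by rw [kaylesPhi_add, kaylesPhi_add, h])
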